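/- arXiv:1811.03805 — 3 statements merged into one kernel-verified Lean document; each statement's English description precedes it below -/
import Mathlib

section
/- Cauchy interlacing inequality: if M is a real symmetric (n+m)×(n+m) matrix and S is the leading n×n principal submatrix of M, with eigenvalues of M listed in increasing order λ_1 ≤ ... ≤ λ_{n+m} and eigenvalues of S listed in increasing order μ_1 ≤ ... ≤ μ_n, then μ_i ≤ λ_{i+m} for all i = 1,...,n. -/
/-!
Let `c = lam (i + m)` and `d = mu i`. The eigenvectors of `M` with eigenvalue `≤ c` span a subspace of
dimension at least `i + m + 1` on which `⟪x, M x⟫ ≤ c ‖x‖²`; the eigenvectors of `S` with eigenvalue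
`≥ d`, extended by zero, span a subspace of dimension at least `n - i` on which
`⟪x, M x⟫ ≥ d ‖x‖²`, because the quadratic form of `M` restricts to that of `S`. The dimensions
add up to more than `n + m`, so the two subspaces share a nonzero vector, and `d ≤ c`.
-/

open Matrix Module Submodule Finset
open scoped InnerProductSpace RealInnerProductSpace

namespace OrthonormalBasis

variable {ι E : Type*} [Fintype ι] [NormedAddCommGroup E] [InnerProductSpace ℝ E]
  {T : E →ₗ[ℝ] E} (b : OrthonormalBasis ι ℝ E) {μ : ι → ℝ}

theorem inner_apply_self_eq_sum (hb : ∀ j, T (b j) = μ j • b j) (x : E) :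
    ⟪x, T x⟫ = ∑ j, μ j * ⟪b j, x⟫ ^ 2 := by
  calc ⟪x, T x⟫ = ⟪x, T (∑ j, ⟪b j, x⟫ • b j)⟫ := by rw [b.sum_repr']
    _ = ∑ j, μ j * ⟪b j, x⟫ ^ 2 := by
      simp only [map_sum, map_smul, hb, inner_sum, inner_smul_right, real_inner_comm x]
      exact sum_congr rfl fun j _ => by ring

theorem inner_eq_zero_of_mem_span_image {s : Set ι} {x : E} (hx : x ∈ span ℝ (b '' s)) {j : ι}
    (hj : j ∉ s) : ⟪b j, x⟫ = 0 := by
  induction hx using Submodule.span_induction with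
  | mem y hy =>
    obtain ⟨k, hk, rfl⟩ := hy
    exact b.orthonormal.2 (ne_of_mem_of_not_mem hk hj).symm
  | zero => exact inner_zero_right _
  | add y z _ _ hy hz => rw [inner_add_right, hy, hz, add_zero]
  | smul a y _ hy => rw [inner_smul_right, hy, mul_zero]

theorem inner_apply_self_le_of_mem_span (hb : ∀ j, T (b j) = μ j • b j) {s : Set ι} {c : ℝ}
    (hs : ∀ j ∈ s, μ j ≤ c) {x : E} (hx : x ∈ span ℝ (b '' s)) : ⟪x, T x⟫ ≤ c * ‖x‖ ^ 2 := by
  rw [b.inner_apply_self_eq_sum hb, ← b.sum_sq_inner_right, mul_sum]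
  refine sum_le_sum fun j _ => ?_
  by_cases hj : j ∈ s
  · exact mul_le_mul_of_nonneg_right (hs j hj) (sq_nonneg _)
  · simp [b.inner_eq_zero_of_mem_span_image hx hj]

theorem le_inner_apply_self_of_mem_span (hb : ∀ j, T (b j) = μ j • b j) {s : Set ι} {c : ℝ}
    (hs : ∀ j ∈ s, c ≤ μ j) {x : E} (hx : x ∈ span ℝ (b '' s)) : c * ‖x‖ ^ 2 ≤ ⟪x, T x⟫ := by
  have hb' : ∀ j, (-T) (b j) = -μ j • b j := fun j => by simp [hb, neg_smul]
  have := b.inner_apply_self_le_of_mem_span hb' (c := -c) (fun j hj => neg_le_neg (hs j hj)) hx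
  simpa [inner_neg_right] using this

theorem finrank_span_image (s : Finset ι) :
    finrank ℝ (span ℝ (b '' s)) = #s := by
  rw [Set.image_eq_range, finrank_span_eq_card (b := fun j : (s : Set ι) => b j)
    (b.orthonormal.linearIndependent.comp _ Subtype.val_injective)]
  simp

variable {κ F : Type*} [Fintype κ] [NormedAddCommGroup F] [InnerProductSpace ℝ F]
  {U : F →ₗ[ℝ] F} (b' : OrthonormalBasis κ ℝ F) {ν : κ → ℝ}

theorem le_of_card_lt_card_add_card (J : F →ₗᵢ[ℝ] E) (hJ : ∀ y, ⟪J y, T (J y)⟫ = ⟪y, U y⟫)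
    (hb : ∀ j, T (b j) = μ j • b j) (hb' : ∀ j, U (b' j) = ν j • b' j)
    {s : Finset ι} {t : Finset κ} {c d : ℝ} (hs : ∀ j ∈ s, μ j ≤ c) (ht : ∀ j ∈ t, d ≤ ν j)
    (hcard : Fintype.card ι < #s + #t) : d ≤ c := by
  have : FiniteDimensional ℝ E := b.toBasis.finiteDimensional_of_finite
  obtain ⟨x, hxs, ⟨y, hyt, rfl⟩, hx0⟩ :
      ∃ x ∈ span ℝ (b '' s), x ∈ (span ℝ (b' '' t)).map J.toLinearMap ∧ x ≠ 0 := by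
    by_contra! h
    have := finrank_add_finrank_le_of_disjoint (disjoint_def.2 h)
    rw [b.finrank_span_image, ← (equivMapOfInjective _ J.injective _).finrank_eq,
      b'.finrank_span_image, finrank_eq_card_basis b.toBasis] at this
    omega
  have hy : 0 < ‖y‖ ^ 2 := by
    have : y ≠ 0 := by rintro rfl; simp at hx0
    positivity
  refine le_of_mul_le_mul_right ?_ hy
  calc d * ‖y‖ ^ 2 ≤ ⟪y, U y⟫ := b'.le_inner_apply_self_of_mem_span hb' ht hyt
    _ = ⟪J y, T (J y)⟫ := (hJ y).symm
    _ ≤ c * ‖J y‖ ^ 2 := b.inner_apply_self_le_of_mem_span hb hs hxs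
    _ = c * ‖y‖ ^ 2 := by rw [J.norm_map]

end OrthonormalBasis

theorem Matrix.conjTranspose_one_submatrix_mul_mul {α ι κ : Type*} [Fintype κ] [DecidableEq κ]
    [Semiring α] [StarRing α] (A : Matrix κ κ α) (e : ι → κ) :
    ((1 : Matrix κ κ α).submatrix id e)ᴴ * A * (1 : Matrix κ κ α).submatrix id e =
      A.submatrix e e := by
  ext i j
  simp [mul_apply, one_apply]

section PrincipalSubmatrix

variable {𝕜 ι κ : Type*} [RCLike 𝕜] [Fintype ι] [Fintype κ] [DecidableEq ι] [DecidableEq κ]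

theorem Matrix.inner_toEuclideanLin_toEuclideanLin {ι' : Type*} [Fintype ι'] [DecidableEq ι']
    (B : Matrix κ ι 𝕜) (C : Matrix κ ι' 𝕜) (x : EuclideanSpace 𝕜 ι) (y : EuclideanSpace 𝕜 ι') :
    ⟪toEuclideanLin B x, toEuclideanLin C y⟫_𝕜 = ⟪x, toEuclideanLin (Bᴴ * C) y⟫_𝕜 := by
  rw [toLpLin_mul_same, LinearMap.comp_apply, toEuclideanLin_conjTranspose_eq_adjoint,
    LinearMap.adjoint_inner_right]

noncomputable def EuclideanSpace.extendByZero (e : ι ↪ κ) :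
    EuclideanSpace 𝕜 ι →ₗᵢ[𝕜] EuclideanSpace 𝕜 κ where
  toLinearMap := toEuclideanLin ((1 : Matrix κ κ 𝕜).submatrix id e)
  norm_map' y := by
    have hP : ((1 : Matrix κ κ 𝕜).submatrix id e)ᴴ * (1 : Matrix κ κ 𝕜).submatrix id e = 1 := by
      simpa [submatrix_one _ e.injective] using
        conjTranspose_one_submatrix_mul_mul (1 : Matrix κ κ 𝕜) e
    rw [← sq_eq_sq₀ (norm_nonneg _) (norm_nonneg _), @norm_sq_eq_re_inner 𝕜,
      @norm_sq_eq_re_inner 𝕜, inner_toEuclideanLin_toEuclideanLin, hP, toLpLin_one,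
      LinearMap.id_apply]

theorem EuclideanSpace.inner_extendByZero_toEuclideanLin (A : Matrix κ κ 𝕜) (e : ι ↪ κ)
    (y : EuclideanSpace 𝕜 ι) :
    ⟪extendByZero e y, toEuclideanLin A (extendByZero e y)⟫_𝕜 =
      ⟪y, toEuclideanLin (A.submatrix e e) y⟫_𝕜 := by
  rw [extendByZero, LinearIsometry.coe_mk, ← LinearMap.comp_apply, ← toLpLin_mul_same,
    inner_toEuclideanLin_toEuclideanLin, ← Matrix.mul_assoc, conjTranspose_one_submatrix_mul_mul]

end PrincipalSubmatrix

theorem Matrix.IsHermitian.toEuclideanLin_eigenvectorBasis {ι : Type*} [Fintype ι] [DecidableEq ι]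
    {A : Matrix ι ι ℝ} (hA : A.IsHermitian) (j : ι) :
    toEuclideanLin A (hA.eigenvectorBasis j) = hA.eigenvalues j • hA.eigenvectorBasis j := by
  ext1
  simp [toLpLin_apply, hA.mulVec_eigenvectorBasis]

/-- Cauchy interlacing inequality.  If `M` is a real symmetric
`(n+m) × (n+m)` matrix and `S` is its leading `n × n` principal submatrix, with the
eigenvalues of `M` listed in increasing order as `lam` and those of `S` listed in
increasing order as `mu` (both with multiplicity), then `mu i ≤ lam (i + m)`. -/
theorem cauchy_interlacing {n m : ℕ}
    (M : Matrix (Fin (n + m)) (Fin (n + m)) ℝ) (hM : M.IsHermitian)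
    (hS : (M.submatrix (Fin.castAdd m) (Fin.castAdd m)).IsHermitian)
    (lam : Fin (n + m) → ℝ) (mu : Fin n → ℝ)
    (hlam_mono : Monotone lam) (hmu_mono : Monotone mu)
    (hlam : ∃ σ : Equiv.Perm (Fin (n + m)), lam = hM.eigenvalues ∘ σ)
    (hmu : ∃ τ : Equiv.Perm (Fin n), mu = hS.eigenvalues ∘ τ) :
    ∀ i : Fin n, mu i ≤ lam ⟨i.val + m, by omega⟩ := by
  intro i
  obtain ⟨σ, rfl⟩ := hlam
  obtain ⟨τ, rfl⟩ := hmu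
  refine OrthonormalBasis.le_of_card_lt_card_add_card (hM.eigenvectorBasis.reindex σ.symm)
    (hS.eigenvectorBasis.reindex τ.symm) (EuclideanSpace.extendByZero (Fin.castAddEmb m))
    (EuclideanSpace.inner_extendByZero_toEuclideanLin M _) (fun j => ?_) (fun j => ?_)
    (s := Iic ⟨i + m, by omega⟩) (t := Ici i) (fun j hj => hlam_mono (mem_Iic.1 hj))
    (fun j hj => hmu_mono (mem_Ici.1 hj)) ?_
  · simpa using hM.toEuclideanLin_eigenvectorBasis (σ j)
  · simpa using hS.toEuclideanLin_eigenvectorBasis (τ j)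
  · simp only [Fintype.card_fin, Fin.card_Iic, Fin.card_Ici]
    omega
end

section
/- With the notation of the block construction (D invertible, P symmetric positive definite, R = −(P B D⁻¹)ᵀ, F_r = P(A − B D⁻¹C), F = [[PA + RᵀC, PB + RᵀD],[QᵀC, QᵀD]]), one has μ₂(F_r) ≤ μ₂(F), where μ₂(M) = λ_max((M + Mᵀ)/2). -/
/-!
The top-left block of `F` is `P A + Rᵀ C = P (A - B D⁻¹ C) = F_r`. Since `xᵀ M x = xᵀ ((M + Mᵀ)/2) x`,
`μ₂(M)` is the maximum of the quadratic form of `M` on the unit sphere. A unit maximiser for `F_r`,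
extended by zero, is a unit vector at which the quadratic form of `F` takes the same value, whence
`μ₂(F_r) ≤ μ₂(F)`: Cauchy interlacing for the largest eigenvalue.
-/

open Matrix

/-- The 2-logarithmic norm (matrix measure) `μ₂(M) = λ_max((M + Mᵀ)/2)`. -/
noncomputable def mu2 {ι : Type*} [Fintype ι] [DecidableEq ι]
    (M : Matrix ι ι ℝ) : ℝ :=
  ⨆ i, (Matrix.IsHermitian.eigenvalues (show ((1/2 : ℝ) • (M + Mᵀ)).IsHermitian by
    unfold Matrix.IsHermitian
    ext i j
    simp [Matrix.conjTranspose_apply, Matrix.add_apply, Matrix.smul_apply]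
    ring)) i

open scoped MatrixOrder

namespace Matrix.IsHermitian

variable {ι : Type*} [Fintype ι] [DecidableEq ι] {S : Matrix ι ι ℝ}

lemma dotProduct_mulVec_le_iSup_eigenvalues_mul (hS : S.IsHermitian) (x : ι → ℝ) :
    x ⬝ᵥ S *ᵥ x ≤ (⨆ i, hS.eigenvalues i) * (x ⬝ᵥ x) := by
  have hS_le : S ≤ algebraMap ℝ _ (⨆ i, hS.eigenvalues i) := by
    refine le_algebraMap_of_spectrum_le ?_
    rw [hS.spectrum_real_eq_range_eigenvalues]
    rintro _ ⟨i, rfl⟩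
    exact le_ciSup (Set.finite_range _).bddAbove i
  have := (Matrix.le_iff.mp hS_le).dotProduct_mulVec_nonneg x
  rw [sub_mulVec, dotProduct_sub, Algebra.algebraMap_eq_smul_one, smul_mulVec, one_mulVec,
    dotProduct_smul, smul_eq_mul, star_trivial] at this
  linarith

lemma exists_eigenvalues_eq_dotProduct_mulVec (hS : S.IsHermitian) (i : ι) :
    ∃ v : ι → ℝ, v ⬝ᵥ v = 1 ∧ hS.eigenvalues i = v ⬝ᵥ S *ᵥ v := by
  refine ⟨hS.eigenvectorBasis i, ?_, by simpa using hS.eigenvalues_eq i⟩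
  have h := hS.eigenvectorBasis.inner_eq_one i
  rwa [EuclideanSpace.inner_eq_star_dotProduct, star_trivial] at h

end Matrix.IsHermitian

section Mu2

variable {ι κ : Type*}

lemma isHermitian_half_smul_add_transpose (M : Matrix ι ι ℝ) :
    ((1/2 : ℝ) • (M + Mᵀ)).IsHermitian := by
  simp [IsHermitian, add_comm]

lemma dotProduct_half_smul_add_transpose_mulVec [Fintype ι] (M : Matrix ι ι ℝ) (x : ι → ℝ) :
    x ⬝ᵥ ((1/2 : ℝ) • (M + Mᵀ)) *ᵥ x = x ⬝ᵥ M *ᵥ x := by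
  rw [smul_mulVec, add_mulVec, dotProduct_smul, dotProduct_add, dotProduct_mulVec x Mᵀ,
    vecMul_transpose, dotProduct_comm, smul_eq_mul]
  ring

variable [Fintype ι] [DecidableEq ι]

lemma mu2_eq_iSup_eigenvalues (M : Matrix ι ι ℝ) :
    mu2 M = ⨆ i, (isHermitian_half_smul_add_transpose M).eigenvalues i := rfl

lemma dotProduct_mulVec_le_mu2_mul (M : Matrix ι ι ℝ) (x : ι → ℝ) :
    x ⬝ᵥ M *ᵥ x ≤ mu2 M * (x ⬝ᵥ x) := by
  rw [← dotProduct_half_smul_add_transpose_mulVec, mu2_eq_iSup_eigenvalues]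
  exact (isHermitian_half_smul_add_transpose M).dotProduct_mulVec_le_iSup_eigenvalues_mul x

lemma exists_dotProduct_mulVec_eq_mu2 [Nonempty ι] (M : Matrix ι ι ℝ) :
    ∃ x : ι → ℝ, x ⬝ᵥ x = 1 ∧ x ⬝ᵥ M *ᵥ x = mu2 M := by
  have hS := isHermitian_half_smul_add_transpose M
  obtain ⟨i, hi⟩ := exists_eq_ciSup_of_finite (f := hS.eigenvalues)
  obtain ⟨x, hx, hix⟩ := hS.exists_eigenvalues_eq_dotProduct_mulVec i
  exact ⟨x, hx, by rw [← dotProduct_half_smul_add_transpose_mulVec, ← hix, hi,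
    mu2_eq_iSup_eigenvalues]⟩

omit [DecidableEq ι] in
lemma sumElim_zero_dotProduct_mulVec [Fintype κ] (M : Matrix (ι ⊕ κ) (ι ⊕ κ) ℝ) (x : ι → ℝ) :
    Sum.elim x (0 : κ → ℝ) ⬝ᵥ M *ᵥ Sum.elim x 0 = x ⬝ᵥ M.toBlocks₁₁ *ᵥ x := by
  conv_lhs => rw [← fromBlocks_toBlocks M, fromBlocks_mulVec]
  simp [dotProduct, Fintype.sum_sum_type]

lemma mu2_toBlocks₁₁_le [Fintype κ] [DecidableEq κ] [Nonempty ι]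
    (M : Matrix (ι ⊕ κ) (ι ⊕ κ) ℝ) : mu2 M.toBlocks₁₁ ≤ mu2 M := by
  obtain ⟨x, hx, hMx⟩ := exists_dotProduct_mulVec_eq_mu2 M.toBlocks₁₁
  set y : ι ⊕ κ → ℝ := Sum.elim x 0
  have hy : y ⬝ᵥ y = 1 := by simpa [y, dotProduct, Fintype.sum_sum_type] using hx
  calc mu2 M.toBlocks₁₁ = y ⬝ᵥ M *ᵥ y := by rw [sumElim_zero_dotProduct_mulVec, hMx]
    _ ≤ mu2 M := by simpa [hy] using dotProduct_mulVec_le_mu2_mul M y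

end Mu2

theorem mu2_reduced_le_mu2_unreduced_general {n m : ℕ} (hn : 0 < n)
    (A : Matrix (Fin n) (Fin n) ℝ) (B : Matrix (Fin n) (Fin m) ℝ)
    (C : Matrix (Fin m) (Fin n) ℝ) (D Q : Matrix (Fin m) (Fin m) ℝ)
    (P : Matrix (Fin n) (Fin n) ℝ)
    (R : Matrix (Fin m) (Fin n) ℝ) (hR : R = -(P * B * D⁻¹)ᵀ)
    (Fr : Matrix (Fin n) (Fin n) ℝ) (hFr : Fr = P * (A - B * D⁻¹ * C))
    (F : Matrix (Fin n ⊕ Fin m) (Fin n ⊕ Fin m) ℝ)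
    (hF : F = Matrix.fromBlocks (P * A + Rᵀ * C) (P * B + Rᵀ * D) (Qᵀ * C) (Qᵀ * D)) :
    mu2 Fr ≤ mu2 F := by
  have : Nonempty (Fin n) := Fin.pos_iff_nonempty.mp hn
  have hFr_block : F.toBlocks₁₁ = Fr := by
    rw [hF, toBlocks_fromBlocks₁₁, hFr, hR, transpose_neg, transpose_transpose, mul_sub,
      Matrix.neg_mul, ← Matrix.mul_assoc, ← Matrix.mul_assoc, sub_eq_add_neg]
  rw [← hFr_block]
  exact mu2_toBlocks₁₁_le F

/-- with `D` invertible, `P` symmetric positive definite,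
`R = −(P B D⁻¹)ᵀ`, `F_r = P(A − B D⁻¹ C)` and
`F = [[P A + Rᵀ C, P B + Rᵀ D], [Qᵀ C, Qᵀ D]]`, one has `μ₂(F_r) ≤ μ₂(F)`. -/
theorem mu2_reduced_le_mu2_unreduced {n m : ℕ} (hn : 0 < n)
    (A : Matrix (Fin n) (Fin n) ℝ) (B : Matrix (Fin n) (Fin m) ℝ)
    (C : Matrix (Fin m) (Fin n) ℝ) (D Q : Matrix (Fin m) (Fin m) ℝ)
    (P : Matrix (Fin n) (Fin n) ℝ) (hP : P.PosDef)
    (hD : IsUnit D.det)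
    (R : Matrix (Fin m) (Fin n) ℝ) (hR : R = -(P * B * D⁻¹)ᵀ)
    (Fr : Matrix (Fin n) (Fin n) ℝ) (hFr : Fr = P * (A - B * D⁻¹ * C))
    (F : Matrix (Fin n ⊕ Fin m) (Fin n ⊕ Fin m) ℝ)
    (hF : F = Matrix.fromBlocks (P * A + Rᵀ * C) (P * B + Rᵀ * D) (Qᵀ * C) (Qᵀ * D)) :
    mu2 Fr ≤ mu2 F :=
  mu2_reduced_le_mu2_unreduced_general hn A B C D Q P R hR Fr hFr F hF
end

section
/- Suppose P ∈ ℝ^{n×n} is symmetric positive definite, D ∈ ℝ^{m×m} is invertible, R = −(P B D⁻¹)ᵀ, Q ∈ ℝ^{m×m}, and the generalized unreduced Jacobian F = [[PA + RᵀC, PB + RᵀD],[QᵀC, QᵀD]] satisfies μ₂(F) < 0. Then every eigenvalue of the reduced Jacobian J_r = A − B D⁻¹ C has negative real part. -/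
/-!
Since `Rᵀ C = -P B D⁻¹ C`, the upper left block of `F` is `P J_r`. Restricting the negative
definite form `F + Fᵀ` to the first block gives `P J_r + (P J_r)ᵀ ≺ 0`. For a complex eigenpair
`J_r v = μ v` this reads `0 > vᴴ (P J_r + (P J_r)ᴴ) v = 2 Re μ · vᴴ P v`, and `vᴴ P v > 0`.
-/

open Matrix

open scoped ComplexOrder

namespace Matrix

variable {ι 𝕜 : Type*} [Fintype ι] [RCLike 𝕜]

theorem IsHermitian.posDef_neg_of_eigenvalues_neg [DecidableEq ι] {A : Matrix ι ι 𝕜}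
    (hA : A.IsHermitian) (h : ∀ i, hA.eigenvalues i < 0) : (-A).PosDef := by
  rw [hA.spectral_theorem, ← map_neg, diagonal_neg]
  simp [Unitary.isUnit_coe.posDef_star_right_conjugate_iff, h]

theorem posDef_neg_add_transpose_of_mu2_neg [DecidableEq ι] {M : Matrix ι ι ℝ} (h : mu2 M < 0) :
    (-(M + Mᵀ)).PosDef := by
  have hS : ((1 / 2 : ℝ) • (M + Mᵀ)).IsHermitian := by
    simp [IsHermitian, conjTranspose_eq_transpose_of_trivial, add_comm]
  have hneg := hS.posDef_neg_of_eigenvalues_neg fun i ↦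
    (le_ciSup (Set.finite_range _).bddAbove i).trans_lt h
  simpa [← smul_neg, smul_smul] using hneg.smul (two_pos (α := ℝ))

theorem re_star_dotProduct_map_mulVec (X : Matrix ι ι ℝ) (v : ι → 𝕜) :
    RCLike.re (star v ⬝ᵥ (X.map (algebraMap ℝ 𝕜) *ᵥ v)) =
      (fun i ↦ RCLike.re (v i)) ⬝ᵥ (X *ᵥ fun i ↦ RCLike.re (v i)) +
        (fun i ↦ RCLike.im (v i)) ⬝ᵥ (X *ᵥ fun i ↦ RCLike.im (v i)) := by
  simp only [dotProduct, mulVec, Pi.star_apply, map_sum, Finset.mul_sum, ← Finset.sum_add_distrib]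
  refine Finset.sum_congr rfl fun i _ ↦ Finset.sum_congr rfl fun j _ ↦ ?_
  simp [RCLike.mul_re]

theorem PosDef.map_algebraMap {P : Matrix ι ι ℝ} (hP : P.PosDef) :
    (P.map (algebraMap ℝ 𝕜)).PosDef := by
  have hH : (P.map (algebraMap ℝ 𝕜)).IsHermitian := hP.isHermitian.map _ fun _ ↦ by simp
  refine PosDef.of_dotProduct_mulVec_pos hH fun v hv ↦ RCLike.pos_iff.mpr
    ⟨?_, hH.im_star_dotProduct_mulVec_self v⟩
  rw [re_star_dotProduct_map_mulVec]
  have hre := hP.posSemidef.dotProduct_mulVec_nonneg fun i ↦ RCLike.re (v i)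
  have him := hP.posSemidef.dotProduct_mulVec_nonneg fun i ↦ RCLike.im (v i)
  simp only [star_trivial] at hre him
  by_cases h : (fun i ↦ RCLike.re (v i)) = 0
  · have h' : (fun i ↦ RCLike.im (v i)) ≠ 0 := fun h' ↦ hv <| funext fun i ↦
      RCLike.ext (by simpa using congrFun h i) (by simpa using congrFun h' i)
    simpa [h] using hP.dotProduct_mulVec_pos h'
  · have := hP.dotProduct_mulVec_pos h
    simp only [star_trivial] at this
    linarith

theorem re_neg_of_mem_spectrum_of_lyapunov [DecidableEq ι] {P J : Matrix ι ι 𝕜} (hP : P.PosDef)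
    (hPJ : (-(P * J + (P * J)ᴴ)).PosDef) {μ : 𝕜} (hμ : μ ∈ spectrum 𝕜 J) : RCLike.re μ < 0 := by
  obtain ⟨v, hv, hv0⟩ := (Module.End.hasEigenvalue_iff_mem_spectrum.mpr
    ((spectrum_toLin' J).symm ▸ hμ)).exists_hasEigenvector
  have hJv : J *ᵥ v = μ • v := by simpa using Module.End.mem_eigenspace_iff.mp hv
  set q := star v ⬝ᵥ (P *ᵥ v)
  have hq : 0 < q := hP.dotProduct_mulVec_pos hv0
  obtain ⟨hq_re, hq_im⟩ := RCLike.pos_iff.mp hq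
  have hPJv : star v ⬝ᵥ ((P * J) *ᵥ v) = μ * q := by
    rw [← mulVec_mulVec, hJv, mulVec_smul, dotProduct_smul, smul_eq_mul]
  have hPJv' : star v ⬝ᵥ ((P * J)ᴴ *ᵥ v) = star (μ * q) := by
    rw [dotProduct_mulVec, vecMul_conjTranspose, star_star, star_dotProduct, hPJv]
  have hform : RCLike.re (star v ⬝ᵥ ((P * J + (P * J)ᴴ) *ᵥ v)) =
      2 * RCLike.re μ * RCLike.re q := by
    rw [add_mulVec, dotProduct_add, hPJv, hPJv']
    simp [RCLike.mul_re, hq_im]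
    ring
  have hneg := hPJ.re_dotProduct_pos hv0
  rw [neg_mulVec, dotProduct_neg, map_neg, hform] at hneg
  nlinarith

end Matrix

theorem small_signal_stable_of_mu2_neg_general {n m : ℕ}
    (A : Matrix (Fin n) (Fin n) ℝ) (B : Matrix (Fin n) (Fin m) ℝ)
    (C : Matrix (Fin m) (Fin n) ℝ) (D Q : Matrix (Fin m) (Fin m) ℝ)
    (P : Matrix (Fin n) (Fin n) ℝ) (hP : P.PosDef)
    (R : Matrix (Fin m) (Fin n) ℝ) (hR : R = -(P * B * D⁻¹)ᵀ)
    (F : Matrix (Fin n ⊕ Fin m) (Fin n ⊕ Fin m) ℝ)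
    (hF : F = Matrix.fromBlocks (P * A + Rᵀ * C) (P * B + Rᵀ * D) (Qᵀ * C) (Qᵀ * D))
    (hmu : mu2 F < 0) :
    ∀ lam ∈ spectrum ℂ ((A - B * D⁻¹ * C).map (algebraMap ℝ ℂ)), lam.re < 0 := by
  set J := A - B * D⁻¹ * C
  have hF₁₁ : P * A + Rᵀ * C = P * J := by
    rw [hR, transpose_neg, transpose_transpose, Matrix.mul_sub, Matrix.neg_mul, ← Matrix.mul_assoc,
      ← Matrix.mul_assoc, sub_eq_add_neg]
  have hF_inl : (-(F + Fᵀ)).submatrix Sum.inl Sum.inl = -(P * J + (P * J)ᵀ) := by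
    rw [hF, hF₁₁]
    rfl
  have hPJ : (-(P * J + (P * J)ᵀ)).PosDef :=
    hF_inl ▸ (posDef_neg_add_transpose_of_mu2_neg hmu).submatrix Sum.inl_injective
  have hPJc : (-(P * J + (P * J)ᵀ)).map (algebraMap ℝ ℂ) =
      -(P.map (algebraMap ℝ ℂ) * J.map (algebraMap ℝ ℂ) +
        (P.map (algebraMap ℝ ℂ) * J.map (algebraMap ℝ ℂ))ᴴ) := by
    ext i j
    simp [Matrix.mul_apply]
  intro lam hlam
  exact re_neg_of_mem_spectrum_of_lyapunov hP.map_algebraMap (hPJc ▸ hPJ.map_algebraMap) hlam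

/-- if the generalized unreduced Jacobian `F` (with `P ≻ 0`, `D`
invertible, `R = −(P B D⁻¹)ᵀ`) satisfies `μ₂(F) < 0`, then every eigenvalue of the
reduced Jacobian `J_r = A − B D⁻¹ C` has negative real part. -/
theorem small_signal_stable_of_mu2_neg {n m : ℕ}
    (A : Matrix (Fin n) (Fin n) ℝ) (B : Matrix (Fin n) (Fin m) ℝ)
    (C : Matrix (Fin m) (Fin n) ℝ) (D Q : Matrix (Fin m) (Fin m) ℝ)
    (P : Matrix (Fin n) (Fin n) ℝ) (hP : P.PosDef)
    (hD : IsUnit D.det)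
    (R : Matrix (Fin m) (Fin n) ℝ) (hR : R = -(P * B * D⁻¹)ᵀ)
    (F : Matrix (Fin n ⊕ Fin m) (Fin n ⊕ Fin m) ℝ)
    (hF : F = Matrix.fromBlocks (P * A + Rᵀ * C) (P * B + Rᵀ * D) (Qᵀ * C) (Qᵀ * D))
    (hmu : mu2 F < 0) :
    ∀ lam ∈ spectrum ℂ ((A - B * D⁻¹ * C).map (algebraMap ℝ ℂ)), lam.re < 0 :=
  small_signal_stable_of_mu2_neg_general A B C D Q P hP R hR F hF hmu
end
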